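/- arXiv:1410.2940 — 4 statements merged into one kernel-verified Lean document; each statement's English description precedes it below -/
import Mathlib

section
/- In a finite simple graph Γ with at least one edge, if the degree sequence takes exactly r distinct values c_1, …, c_r, then the alliance polynomial A(Γ;x) has at least r+1 nonzero terms, namely the terms x^{n−c_1}, …, x^{n−c_r} and x^{n+δ_n}, where n is the order and δ_n the minimum degree of Γ. -/
open Finset Polynomial
open scoped Classical

noncomputable section

variable {V : Type*} [Fintype V]

/-- Number of neighbors of `v` inside `S` (as an integer). -/
def degIn (G : SimpleGraph V) (S : Finset V) (v : V) : ℤ :=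
  ((S.filter (fun u => G.Adj v u)).card : ℤ)

/-- Number of neighbors of `v` outside `S` (as an integer). -/
def degOut (G : SimpleGraph V) (S : Finset V) (v : V) : ℤ :=
  ((Sᶜ.filter (fun u => G.Adj v u)).card : ℤ)

/-- The exact index of alliance of `S`. -/
def exactIndex (G : SimpleGraph V) (S : Finset V) : ℤ :=
  if h : S.Nonempty then S.inf' h (fun v => degIn G S v - degOut G S v) else 0

/-- Nonempty vertex subsets inducing a connected subgraph. -/
def goodSets (G : SimpleGraph V) : Finset (Finset V) :=
  Finset.univ.filter (fun S => S.Nonempty ∧ (G.induce (S : Set V)).Connected)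

/-- The alliance polynomial. -/
def alliancePoly (G : SimpleGraph V) : Polynomial ℤ :=
  ∑ S ∈ goodSets G, X ^ (((Fintype.card V : ℤ) + exactIndex G S).toNat)

/-- `A_k(Γ)`: number of connected exact defensive `k`-alliances. -/
def allianceCount (G : SimpleGraph V) (k : ℤ) : ℕ :=
  ((goodSets G).filter (fun S => exactIndex G S = k)).card

end

section Aux
variable {V : Type*} [Fintype V] (G : SimpleGraph V)

lemma coeff_alliancePoly (m : ℕ) :
    (alliancePoly G).coeff m =
      (((goodSets G).filter
        (fun S => ((Fintype.card V : ℤ) + exactIndex G S).toNat = m)).card : ℤ) := by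
  rw [alliancePoly, finset_sum_coeff]
  simp only [coeff_X_pow]
  rw [Finset.sum_ite, Finset.sum_const, Finset.sum_const_zero, add_zero, nsmul_eq_mul, mul_one]
  norm_cast
  congr 1
  apply Finset.filter_congr
  intro x _
  simp [eq_comm]

lemma coeff_alliancePoly_ne_zero {S : Finset V} (hS : S ∈ goodSets G) {m : ℕ}
    (hm : ((Fintype.card V : ℤ) + exactIndex G S).toNat = m) :
    (alliancePoly G).coeff m ≠ 0 := by
  rw [coeff_alliancePoly]
  have h1 : 0 < ((goodSets G).filter
      (fun S => ((Fintype.card V : ℤ) + exactIndex G S).toNat = m)).card :=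
    Finset.card_pos.2 ⟨S, Finset.mem_filter.2 ⟨hS, hm⟩⟩
  exact_mod_cast h1.ne'

lemma singleton_mem_goodSets (v : V) : {v} ∈ goodSets G := by
  rw [goodSets, Finset.mem_filter]
  refine ⟨Finset.mem_univ _, Finset.singleton_nonempty v, ?_⟩
  haveI : Nonempty { x // x ∈ (({v} : Finset V) : Set V) } := ⟨⟨v, by simp⟩⟩
  refine ⟨?_⟩
  intro a b
  obtain ⟨a, ha⟩ := a
  obtain ⟨b, hb⟩ := b
  simp only [Finset.coe_singleton, Set.mem_singleton_iff] at ha hb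
  subst ha; subst hb
  exact SimpleGraph.Reachable.refl _

lemma exactIndex_singleton (v : V) : exactIndex G {v} = -(G.degree v : ℤ) := by
  rw [exactIndex, dif_pos (Finset.singleton_nonempty v), Finset.inf'_singleton]
  have h1 : degIn G {v} v = 0 := by
    simp [degIn, Finset.filter_singleton, G.irrefl]
  have h2 : degOut G {v} v = (G.degree v : ℤ) := by
    rw [degOut]
    have he : ({v} : Finset V)ᶜ.filter (fun u => G.Adj v u) = G.neighborFinset v := by
      ext u
      simp only [Finset.mem_filter, Finset.mem_compl, Finset.mem_singleton,
        SimpleGraph.mem_neighborFinset]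
      exact ⟨fun h => h.2, fun h => ⟨fun e => G.ne_of_adj h e.symm, h⟩⟩
    rw [he]
    norm_cast
  rw [h1, h2]; ring

/-- The connected component of `v` as a finset. -/
noncomputable def gcomp (v : V) : Finset V := Finset.univ.filter (fun u => G.Reachable v u)

lemma mem_gcomp {v u : V} : u ∈ gcomp G v ↔ G.Reachable v u := by simp [gcomp]

lemma self_mem_gcomp (v : V) : v ∈ gcomp G v := (mem_gcomp G).2 (by rfl)

lemma gcomp_mem_goodSets (v : V) : gcomp G v ∈ goodSets G := by
  rw [goodSets, Finset.mem_filter]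
  refine ⟨Finset.mem_univ _, ⟨v, self_mem_gcomp G v⟩, ?_⟩
  apply SimpleGraph.induce_connected_of_patches v (Finset.mem_coe.2 (self_mem_gcomp G v))
  intro u hu
  obtain ⟨p⟩ : G.Reachable v u := (mem_gcomp G).1 (Finset.mem_coe.1 hu)
  refine ⟨{x | x ∈ p.support}, ?_, p.start_mem_support, p.end_mem_support, ?_⟩
  · intro x hx
    exact Finset.mem_coe.2 ((mem_gcomp G).2 ⟨p.takeUntil x hx⟩)
  · exact p.connected_induce_support.preconnected _ _

lemma degOut_gcomp {v u : V} (hu : u ∈ gcomp G v) : degOut G (gcomp G v) u = 0 := by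
  rw [degOut]
  have he : (gcomp G v)ᶜ.filter (fun w => G.Adj u w) = ∅ := by
    rw [Finset.filter_eq_empty_iff]
    intro w hw hadj
    exact (Finset.mem_compl.1 hw)
      ((mem_gcomp G).2 (((mem_gcomp G).1 hu).trans hadj.reachable))
  rw [he]; simp

lemma degIn_gcomp {v u : V} (hu : u ∈ gcomp G v) : degIn G (gcomp G v) u = (G.degree u : ℤ) := by
  rw [degIn]
  have he : (gcomp G v).filter (fun w => G.Adj u w) = G.neighborFinset u := by
    ext w
    simp only [Finset.mem_filter, SimpleGraph.mem_neighborFinset]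
    exact ⟨fun h => h.2, fun h => ⟨(mem_gcomp G).2 (((mem_gcomp G).1 hu).trans h.reachable), h⟩⟩
  rw [he]
  norm_cast

lemma exactIndex_gcomp (v : V) :
    exactIndex G (gcomp G v) =
      (gcomp G v).inf' ⟨v, self_mem_gcomp G v⟩ (fun u => (G.degree u : ℤ)) := by
  rw [exactIndex, dif_pos ⟨v, self_mem_gcomp G v⟩]
  apply Finset.inf'_congr _ rfl
  intro u hu
  rw [degIn_gcomp G hu, degOut_gcomp G hu]; ring

end Aux

/-- a graph with an edge whose degree sequence takes `r` values has
at least `r + 1` terms in its alliance polynomial. -/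
theorem alliancePoly_terms {V : Type*} [Fintype V] (G : SimpleGraph V)
    (h : ∃ v w : V, G.Adj v w) :
    (∀ c ∈ Finset.image (fun v => G.degree v) (Finset.univ : Finset V),
        (alliancePoly G).coeff (Fintype.card V - c) ≠ 0) ∧
    (alliancePoly G).coeff (Fintype.card V + G.minDegree) ≠ 0 ∧
    (Finset.image (fun v => G.degree v) (Finset.univ : Finset V)).card + 1 ≤ (alliancePoly G).support.card := by
  obtain ⟨v0, w0, hvw⟩ := h
  haveI : Nonempty V := ⟨v0⟩
  have part1 : ∀ c ∈ Finset.image (fun v => G.degree v) (Finset.univ : Finset V),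
      (alliancePoly G).coeff (Fintype.card V - c) ≠ 0 := by
    intro c hc
    simp only [Finset.mem_image, Finset.mem_univ, true_and] at hc
    obtain ⟨v, rfl⟩ := hc
    apply coeff_alliancePoly_ne_zero G (singleton_mem_goodSets G v)
    have hd : G.degree v < Fintype.card V := G.degree_lt_card_verts v
    rw [exactIndex_singleton]
    omega
  have part2 : (alliancePoly G).coeff (Fintype.card V + G.minDegree) ≠ 0 := by
    obtain ⟨v1, hv1⟩ := G.exists_minimal_degree_vertex
    apply coeff_alliancePoly_ne_zero G (gcomp_mem_goodSets G v1)
    rw [exactIndex_gcomp]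
    have hle : (gcomp G v1).inf' ⟨v1, self_mem_gcomp G v1⟩ (fun u => (G.degree u : ℤ))
        = (G.minDegree : ℤ) := by
      apply le_antisymm
      · have := Finset.inf'_le (fun u => (G.degree u : ℤ)) (self_mem_gcomp G v1)
        rw [← hv1] at this
        exact this
      · apply Finset.le_inf'
        intro u _
        exact_mod_cast G.minDegree_le_degree u
    rw [hle]
    omega
  refine ⟨part1, part2, ?_⟩
  set D := Finset.image (fun v => G.degree v) (Finset.univ : Finset V) with hD
  have hk1 : 1 ≤ exactIndex G (gcomp G v0) := by
    rw [exactIndex_gcomp]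
    apply Finset.le_inf'
    intro u hu
    have hru := (mem_gcomp G).1 hu
    have hdpos : 0 < G.degree u := by
      rcases eq_or_ne u v0 with rfl | hne
      · exact G.degree_pos_iff_exists_adj u |>.2 ⟨w0, hvw⟩
      · obtain ⟨p⟩ := hru.symm
        cases p with
        | nil => exact absurd rfl hne
        | cons ha q => exact G.degree_pos_iff_exists_adj u |>.2 ⟨_, ha⟩
    exact_mod_cast hdpos
  set e := ((Fintype.card V : ℤ) + exactIndex G (gcomp G v0)).toNat with he
  have hen : Fintype.card V + 1 ≤ e := by omega
  have hce : (alliancePoly G).coeff e ≠ 0 :=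
    coeff_alliancePoly_ne_zero G (gcomp_mem_goodSets G v0) rfl
  have hsub : insert e (D.image (fun c => Fintype.card V - c)) ⊆ (alliancePoly G).support := by
    intro m hm
    rw [Finset.mem_insert] at hm
    rw [Polynomial.mem_support_iff]
    rcases hm with rfl | hm
    · exact hce
    · obtain ⟨c, hc, rfl⟩ := Finset.mem_image.1 hm
      exact part1 c hc
  have hnotin : e ∉ D.image (fun c => Fintype.card V - c) := by
    intro hm
    obtain ⟨c, hc, hce2⟩ := Finset.mem_image.1 hm
    omega
  have h1 : (D.image (fun c => Fintype.card V - c)).card = D.card := by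
    apply Finset.card_image_of_injOn
    intro a ha b hb hab
    obtain ⟨va, -, rfl⟩ := Finset.mem_image.1 (Finset.mem_coe.1 ha)
    obtain ⟨vb, -, rfl⟩ := Finset.mem_image.1 (Finset.mem_coe.1 hb)
    have hab' : Fintype.card V - G.degree va = Fintype.card V - G.degree vb := hab
    have h2 := G.degree_lt_card_verts va
    have h3 := G.degree_lt_card_verts vb
    omega
  calc D.card + 1 = (insert e (D.image (fun c => Fintype.card V - c))).card := by
        rw [Finset.card_insert_of_notMem hnotin, h1]
    _ ≤ _ := Finset.card_le_card hsub
end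

section
/- Let Γ be a finite simple graph with maximum degree δ_1. The coefficient A_{δ_1}(Γ) of the alliance polynomial equals the number of connected components of Γ that are δ_1-regular. -/
open Finset Polynomial
open scoped Classical

noncomputable section

variable {V : Type*} [Fintype V]

/-- If `s` is closed under adjacency, walks starting in `s` stay in `s` and lift
to the induced graph. -/
lemma reachable_induce_of_closed {G : SimpleGraph V} {s : Set V}
    (hs : ∀ ⦃a b : V⦄, a ∈ s → G.Adj a b → b ∈ s) :
    ∀ {u v : V} (_ : G.Walk u v) (hu : u ∈ s),
      ∃ hv : v ∈ s, (G.induce s).Reachable ⟨u, hu⟩ ⟨v, hv⟩ := by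
  intro u v p
  induction p with
  | nil => exact fun hu => ⟨hu, SimpleGraph.Reachable.refl _⟩
  | @cons a b c h p ih =>
    intro hu
    have hb : b ∈ s := hs hu h
    obtain ⟨hv, hr⟩ := ih hb
    refine ⟨hv, SimpleGraph.Reachable.trans ?_ hr⟩
    exact SimpleGraph.Adj.reachable (by simpa using h)

lemma degIn_add_degOut {G : SimpleGraph V} (S : Finset V) (v : V) :
    degIn G S v + degOut G S v = (G.degree v : ℤ) := by
  classical
  unfold degIn degOut
  rw [← Nat.cast_add]
  norm_cast
  rw [← Finset.card_union_of_disjoint (by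
    exact Finset.disjoint_filter_filter (disjoint_compl_right)),
    ← Finset.filter_union, Finset.union_compl]
  rw [SimpleGraph.degree, SimpleGraph.neighborFinset_eq_filter]

lemma degOut_nonneg {G : SimpleGraph V} (S : Finset V) (v : V) : 0 ≤ degOut G S v := by
  unfold degOut; positivity

/-- Characterization of sets with exact index equal to the maximum degree. -/
lemma exactIndex_eq_maxDegree_iff {G : SimpleGraph V} {S : Finset V} (hS : S.Nonempty) :
    exactIndex G S = (G.maxDegree : ℤ) ↔
      ∀ v ∈ S, degOut G S v = 0 ∧ G.degree v = G.maxDegree := by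
  classical
  rw [exactIndex, dif_pos hS]
  constructor
  · intro h v hv
    have h1 : S.inf' hS (fun v => degIn G S v - degOut G S v) ≤ degIn G S v - degOut G S v :=
      Finset.inf'_le _ hv
    rw [h] at h1
    have h2 : degIn G S v - degOut G S v = (G.degree v : ℤ) - 2 * degOut G S v := by
      have := degIn_add_degOut (G := G) S v; linarith
    have h3 : (G.degree v : ℤ) ≤ (G.maxDegree : ℤ) := by
      exact_mod_cast G.degree_le_maxDegree v
    have h4 : 0 ≤ degOut G S v := degOut_nonneg S v
    constructor
    · linarith
    · have : (G.degree v : ℤ) = (G.maxDegree : ℤ) := by linarith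
      exact_mod_cast this
  · intro h
    obtain ⟨v0, hv0⟩ := hS
    apply le_antisymm
    · refine le_trans (Finset.inf'_le _ hv0) ?_
      obtain ⟨h1, h2⟩ := h v0 hv0
      have := degIn_add_degOut (G := G) S v0
      rw [h1, add_zero] at this
      rw [this, h1, sub_zero, h2]
    · refine Finset.le_inf' _ _ fun v hv => ?_
      obtain ⟨h1, h2⟩ := h v hv
      have := degIn_add_degOut (G := G) S v
      rw [h1, add_zero] at this
      rw [this, h1, sub_zero, h2]

end

/-- `A_{δ₁}(Γ)` is the number of connected components which are
`δ₁`-regular. -/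
theorem allianceCount_maxDegree {V : Type*} [Fintype V] (G : SimpleGraph V) :
    allianceCount G (G.maxDegree : ℤ)
      = Nat.card {C : G.ConnectedComponent //
          ∀ v : V, G.connectedComponentMk v = C → G.degree v = G.maxDegree} := by
  classical
  rw [Nat.card_eq_fintype_card, Fintype.card_subtype]
  unfold allianceCount
  symm
  refine Finset.card_bij (fun C _ => C.supp.toFinset) ?_ ?_ ?_
  · -- maps into the filtered good sets
    intro C hC
    rw [Finset.mem_filter] at hC
    have hreg : ∀ v : V, G.connectedComponentMk v = C → G.degree v = G.maxDegree := hC.2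
    obtain ⟨v0, hv0⟩ := C.exists_rep
    have hv0' : v0 ∈ C.supp := by rwa [SimpleGraph.ConnectedComponent.mem_supp_iff]
    have hclosed : ∀ ⦃a b : V⦄, a ∈ C.supp → G.Adj a b → b ∈ C.supp := by
      intro a b ha hab
      rw [SimpleGraph.ConnectedComponent.mem_supp_iff] at ha ⊢
      rw [← ha]
      exact SimpleGraph.ConnectedComponent.eq.2 hab.symm.reachable
    have hne : (C.supp.toFinset : Finset V).Nonempty := ⟨v0, by simpa using hv0'⟩
    have hcoe : ((C.supp.toFinset : Finset V) : Set V) = C.supp := by simp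
    have hconn : (G.induce ((C.supp.toFinset : Finset V) : Set V)).Connected := by
      rw [hcoe]
      haveI : Nonempty C.supp := ⟨⟨v0, hv0'⟩⟩
      refine ⟨fun a b => ?_⟩
      have hra : G.Reachable v0 a.1 := by
        have := a.2; rw [SimpleGraph.ConnectedComponent.mem_supp_iff] at this
        exact SimpleGraph.ConnectedComponent.exact (by rw [this]; exact hv0)
      have hrb : G.Reachable v0 b.1 := by
        have := b.2; rw [SimpleGraph.ConnectedComponent.mem_supp_iff] at this
        exact SimpleGraph.ConnectedComponent.exact (by rw [this]; exact hv0)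
      obtain ⟨ha2, ra⟩ := reachable_induce_of_closed hclosed hra.some hv0'
      obtain ⟨hb2, rb⟩ := reachable_induce_of_closed hclosed hrb.some hv0'
      have ea : (⟨a.1, ha2⟩ : C.supp) = a := Subtype.ext rfl
      have eb : (⟨b.1, hb2⟩ : C.supp) = b := Subtype.ext rfl
      rw [ea] at ra; rw [eb] at rb
      exact ra.symm.trans rb
    rw [Finset.mem_filter]
    refine ⟨by rw [goodSets, Finset.mem_filter]; exact ⟨Finset.mem_univ _, hne, hconn⟩, ?_⟩
    rw [exactIndex_eq_maxDegree_iff hne]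
    intro v hv
    have hv' : v ∈ C.supp := by simpa using hv
    constructor
    · rw [degOut]
      norm_cast
      rw [Finset.card_eq_zero, Finset.filter_eq_empty_iff]
      intro u hu hadj
      rw [Finset.mem_compl] at hu
      exact hu (by simpa using hclosed hv' hadj)
    · exact hreg v (by rwa [← SimpleGraph.ConnectedComponent.mem_supp_iff])
  · -- injective
    intro C1 h1 C2 h2 heq
    have : C1.supp = C2.supp := by
      have := congrArg (fun (s : Finset V) => (s : Set V)) heq
      simpa using this
    exact SimpleGraph.ConnectedComponent.supp_inj.mp this
  · -- surjective
    intro S hS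
    rw [Finset.mem_filter] at hS
    obtain ⟨hSgood, hSidx⟩ := hS
    rw [goodSets, Finset.mem_filter] at hSgood
    obtain ⟨-, hne, hconn⟩ := hSgood
    obtain ⟨v0, hv0⟩ := hne
    have hprop := (exactIndex_eq_maxDegree_iff ⟨v0, hv0⟩).1 hSidx
    have hclosed : ∀ ⦃a b : V⦄, a ∈ (S : Set V) → G.Adj a b → b ∈ (S : Set V) := by
      intro a b ha hab
      by_contra hb
      have h0 := (hprop a ha).1
      rw [degOut] at h0
      norm_cast at h0
      rw [Finset.card_eq_zero, Finset.filter_eq_empty_iff] at h0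
      exact h0 (Finset.mem_compl.2 hb) hab
    refine ⟨G.connectedComponentMk v0, ?_, ?_⟩
    · rw [Finset.mem_filter]
      refine ⟨Finset.mem_univ _, fun v hv => ?_⟩
      have hreach : G.Reachable v0 v := SimpleGraph.ConnectedComponent.eq.1 hv.symm
      obtain ⟨hvS, -⟩ := reachable_induce_of_closed hclosed hreach.some hv0
      exact (hprop v hvS).2
    · -- S = supp of the component of v0
      ext u
      simp only [Set.mem_toFinset, SimpleGraph.ConnectedComponent.mem_supp_iff]
      constructor
      · intro hu
        have hr : G.Reachable v0 u := (SimpleGraph.ConnectedComponent.eq.1 hu).symm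
        obtain ⟨huS, -⟩ := reachable_induce_of_closed hclosed hr.some hv0
        exact Finset.mem_coe.mp huS
      · intro hu
        obtain ⟨hsconn⟩ := hconn.preconnected ⟨v0, Finset.mem_coe.mpr hv0⟩
          ⟨u, Finset.mem_coe.mpr hu⟩
        have hr : G.Reachable v0 u := by
          have := SimpleGraph.Reachable.map
            (SimpleGraph.Embedding.induce ((S : Finset V) : Set V)).toHom ⟨hsconn⟩
          simpa using this
        exact SimpleGraph.ConnectedComponent.eq.2 hr.symm
end

section
/- If G is a subgraph of a finite simple graph Γ with G ≠ Γ, then A(Γ;x) ≠ A(G;x), i.e. the alliance polynomials of Γ and G differ. -/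
open Finset Polynomial
open scoped Classical

/-- a proper subgraph has a different alliance polynomial. -/
theorem alliancePoly_ne_of_lt {V : Type*} [Fintype V] (G H : SimpleGraph V)
    (h : G < H) :
    alliancePoly H ≠ alliancePoly G := by
  intro heq
  have hle : G ≤ H := le_of_lt h
  obtain ⟨u, v, hadj, hnadj⟩ : ∃ u v, H.Adj u v ∧ ¬ G.Adj u v := by
    by_contra hc
    push_neg at hc
    exact h.ne (le_antisymm hle (fun u v hv => hc u v hv))
  have huv : u ≠ v := hadj.ne
  -- goodSets G ⊆ goodSets H
  have hsub : goodSets G ⊆ goodSets H := by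
    intro S hS
    simp only [goodSets, mem_filter, mem_univ, true_and] at hS ⊢
    exact ⟨hS.1, hS.2.mono (fun a b hab => hle hab)⟩
  -- {u,v} is good for H
  have hmemH : ({u, v} : Finset V) ∈ goodSets H := by
    simp only [goodSets, mem_filter, mem_univ, true_and]
    refine ⟨⟨u, by simp⟩, ?_⟩
    constructor
    intro a b
    have hmem : ∀ w : (({u, v} : Finset V) : Set V), w.1 = u ∨ w.1 = v := by
      intro w
      have := w.2
      simpa using this
    have key : ∀ w₁ w₂ : (({u, v} : Finset V) : Set V), w₁.1 = u → w₂.1 = v →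
        (H.induce (({u, v} : Finset V) : Set V)).Reachable w₁ w₂ := by
      intro w₁ w₂ h1 h2
      refine SimpleGraph.Adj.reachable ?_
      show H.Adj w₁.1 w₂.1
      rw [h1, h2]; exact hadj
    rcases hmem a with ha | ha <;> rcases hmem b with hb | hb
    · have : a = b := Subtype.ext (ha.trans hb.symm)
      rw [this]
    · exact key a b ha hb
    · exact (key b a hb ha).symm
    · have : a = b := Subtype.ext (ha.trans hb.symm)
      rw [this]
  -- {u,v} is not good for G
  have hmemG : ({u, v} : Finset V) ∉ goodSets G := by
    simp only [goodSets, mem_filter, mem_univ, true_and, not_and]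
    intro _
    intro hconn
    have hbot : (G.induce (({u, v} : Finset V) : Set V)) = ⊥ := by
      ext a b
      simp only [SimpleGraph.bot_adj, iff_false]
      intro hab
      have ha := a.2
      have hb := b.2
      simp only [coe_insert, Set.mem_insert_iff, coe_singleton, Set.mem_singleton_iff] at ha hb
      have hab' : G.Adj a.1 b.1 := hab
      rcases ha with ha | ha <;> rcases hb with hb | hb <;>
        rw [ha, hb] at hab'
      · exact G.irrefl hab'
      · exact hnadj hab'
      · exact hnadj hab'.symm
      · exact G.irrefl hab'
    have hr := hconn.preconnected ⟨u, by simp⟩ ⟨v, by simp⟩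
    rw [hbot] at hr
    rw [SimpleGraph.reachable_bot] at hr
    exact huv (congrArg Subtype.val hr)
  have hss : goodSets G ⊂ goodSets H := ⟨hsub, fun hc => hmemG (hc hmemH)⟩
  have hcard : (goodSets G).card < (goodSets H).card := Finset.card_lt_card hss
  have e : ∀ K : SimpleGraph V, (alliancePoly K).eval 1 = ((goodSets K).card : ℤ) := by
    intro K
    simp [alliancePoly, eval_finset_sum]
  have := congrArg (Polynomial.eval (1 : ℤ)) heq
  rw [e H, e G] at this
  omega
end

section
/- The alliance polynomial of the complete bipartite graph K_{n,m} (n, m ≥ 1) is A(K_{n,m};x) = n·x^n + m·x^m + Σ_{i=1}^{n} Σ_{j=1}^{m} C(n,i)·C(m,j)·x^{n+m+min(2i−n, 2j−m)}. -/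
open Finset Polynomial
open scoped Classical

section Aux

open Sum

lemma mem_goodSets {V : Type*} [Fintype V] {G : SimpleGraph V} {S : Finset V} :
    S ∈ goodSets G ↔ S.Nonempty ∧ (G.induce (S : Set V)).Connected := by
  unfold goodSets; rw [Finset.mem_filter]; simp

variable {n m : ℕ}
local notation "G" => completeBipartiteGraph (Fin n) (Fin m)
local notation "W" => (Fin n ⊕ Fin m)

lemma card_filter_compl {α : Type*} [Fintype α] [DecidableEq α] (p : α → Prop)
    [DecidablePred p] (S : Finset α) :
    (Sᶜ.filter p).card = (Finset.univ.filter p).card - (S.filter p).card := by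
  have h : Sᶜ.filter p = Finset.univ.filter p \ S.filter p := by
    ext x; simp; tauto
  rw [h, card_sdiff_of_subset (Finset.filter_subset_filter _ (Finset.subset_univ S))]

lemma compl_toRight (S : Finset W) : Sᶜ.toRight = S.toRightᶜ := by ext x; simp
lemma compl_toLeft (S : Finset W) : Sᶜ.toLeft = S.toLeftᶜ := by ext x; simp

lemma val_inl (S : Finset W) (a : Fin n) :
    degIn (G) S (inl a) - degOut (G) S (inl a) = 2 * S.toRight.card - m := by
  have h1 : S.toRight.card ≤ m := by
    simpa using (card_le_card (subset_univ S.toRight))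
  have e1 : S.filter (fun u => (G).Adj (inl a) u) = S.toRight.map ⟨inr, inr_injective⟩ := by
    ext x; cases x <;> simp
  have e0 : (Finset.univ : Finset W).filter (fun u => (G).Adj (inl a) u)
      = (Finset.univ : Finset (Fin m)).map ⟨inr, inr_injective⟩ := by
    ext x; cases x <;> simp
  have h2 : (S.filter (fun u => (G).Adj (inl a) u)).card ≤ m := by
    rw [e1, card_map]; exact h1
  have main : ((S.filter (fun u => (G).Adj (inl a) u)).card : ℤ)
      - ((Sᶜ.filter (fun u => (G).Adj (inl a) u)).card : ℤ)
      = 2 * S.toRight.card - m := by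
    rw [card_filter_compl, e0, card_map, card_univ, Fintype.card_fin,
      Nat.cast_sub h2, e1, card_map]
    ring
  rw [degIn, degOut]
  convert main using 4
  · ext x; simp

lemma val_inr (S : Finset W) (b : Fin m) :
    degIn (G) S (inr b) - degOut (G) S (inr b) = 2 * S.toLeft.card - n := by
  have h1 : S.toLeft.card ≤ n := by
    simpa using (card_le_card (subset_univ S.toLeft))
  have e1 : S.filter (fun u => (G).Adj (inr b) u) = S.toLeft.map ⟨inl, inl_injective⟩ := by
    ext x; cases x <;> simp
  have e0 : (Finset.univ : Finset W).filter (fun u => (G).Adj (inr b) u)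
      = (Finset.univ : Finset (Fin n)).map ⟨inl, inl_injective⟩ := by
    ext x; cases x <;> simp
  have h2 : (S.filter (fun u => (G).Adj (inr b) u)).card ≤ n := by
    rw [e1, card_map]; exact h1
  have main : ((S.filter (fun u => (G).Adj (inr b) u)).card : ℤ)
      - ((Sᶜ.filter (fun u => (G).Adj (inr b) u)).card : ℤ)
      = 2 * S.toLeft.card - n := by
    rw [card_filter_compl, e0, card_map, card_univ, Fintype.card_fin,
      Nat.cast_sub h2, e1, card_map]
    ring
  rw [degIn, degOut]
  convert main using 4
  · ext x; simp

lemma exactIndex_mixed (S : Finset W) (ha : S.toLeft.Nonempty) (hb : S.toRight.Nonempty) :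
    exactIndex (G) S
      = min (2 * (S.toLeft.card : ℤ) - n) (2 * (S.toRight.card : ℤ) - m) := by
  obtain ⟨a, ha'⟩ := ha
  obtain ⟨b, hb'⟩ := hb
  rw [mem_toLeft] at ha'
  rw [mem_toRight] at hb'
  have hS : S.Nonempty := ⟨_, ha'⟩
  rw [exactIndex, dif_pos hS]
  apply le_antisymm
  · apply le_min
    · exact (inf'_le _ hb').trans_eq (val_inr S b)
    · exact (inf'_le _ ha').trans_eq (val_inl S a)
  · apply le_inf'
    intro v hv
    cases v with
    | inl a => rw [val_inl]; exact min_le_right _ _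
    | inr b => rw [val_inr]; exact min_le_left _ _

lemma exactIndex_singleton_inl (a : Fin n) :
    exactIndex (G) {inl a} = -(m : ℤ) := by
  have hS : ({inl a} : Finset W).Nonempty := singleton_nonempty _
  rw [exactIndex, dif_pos hS, inf'_singleton, val_inl]
  have : ({inl a} : Finset W).toRight = ∅ := by ext x; simp
  rw [this]; simp

lemma exactIndex_singleton_inr (b : Fin m) :
    exactIndex (G) {inr b} = -(n : ℤ) := by
  have hS : ({inr b} : Finset W).Nonempty := singleton_nonempty _
  rw [exactIndex, dif_pos hS, inf'_singleton, val_inr]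
  have : ({inr b} : Finset W).toLeft = ∅ := by ext x; simp
  rw [this]; simp

lemma singleton_good (v : W) : {v} ∈ goodSets (G) := by
  rw [mem_goodSets]
  refine ⟨singleton_nonempty _, ?_⟩
  haveI : Nonempty (({v} : Finset W) : Set W) := ⟨⟨v, by simp⟩⟩
  refine SimpleGraph.Connected.mk ?_
  intro x y
  have : x = y := Subtype.ext (by
    have hx := x.2; have hy := y.2
    simp only [coe_singleton, Set.mem_singleton_iff] at hx hy
    rw [hx, hy])
  rw [this]

lemma mixed_good (S : Finset W) (ha : S.toLeft.Nonempty) (hb : S.toRight.Nonempty) :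
    S ∈ goodSets (G) := by
  obtain ⟨a, ha'⟩ := ha
  obtain ⟨b, hb'⟩ := hb
  rw [mem_toLeft] at ha'
  rw [mem_toRight] at hb'
  rw [mem_goodSets]
  refine ⟨⟨_, ha'⟩, ?_⟩
  haveI : Nonempty ((S : Set W)) := ⟨⟨inl a, by simpa using ha'⟩⟩
  refine SimpleGraph.Connected.mk ?_
  intro x y
  have key : ∀ z : (S : Set W),
      ((G).induce (S : Set W)).Reachable z ⟨inl a, by simpa using ha'⟩ := by
    intro z
    obtain ⟨zv, hz⟩ := z
    cases zv with
    | inl c =>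
      have h1 : ((G).induce (S : Set W)).Adj ⟨inl c, hz⟩ ⟨inr b, by simpa using hb'⟩ := by
        exact Or.inl ⟨rfl, rfl⟩
      have h2 : ((G).induce (S : Set W)).Adj ⟨inr b, by simpa using hb'⟩
          ⟨inl a, by simpa using ha'⟩ := by
        exact Or.inr ⟨rfl, rfl⟩
      exact h1.reachable.trans h2.reachable
    | inr c =>
      have h2 : ((G).induce (S : Set W)).Adj ⟨inr c, hz⟩ ⟨inl a, by simpa using ha'⟩ := by
        exact Or.inr ⟨rfl, rfl⟩
      exact h2.reachable
  exact (key x).trans (key y).symm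

lemma good_left_eq_singleton (S : Finset W) (hS : S ∈ goodSets (G))
    (hR : S.toRight = ∅) : ∃ a : Fin n, S = {inl a} := by
  rw [mem_goodSets] at hS
  obtain ⟨hne, hconn⟩ := hS
  have hleft : ∀ x ∈ S, ∃ a : Fin n, x = inl a := by
    intro x hx
    cases x with
    | inl a => exact ⟨a, rfl⟩
    | inr b => exact absurd (mem_toRight.2 hx) (by simp [hR])
  have hbot : (G).induce (S : Set W) = ⊥ := by
    ext x y
    simp only [SimpleGraph.comap_adj, SimpleGraph.bot_adj, iff_false,
      Function.Embedding.coe_subtype]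
    obtain ⟨c, hc⟩ := hleft x.1 (by simpa using x.2)
    obtain ⟨d, hd⟩ := hleft y.1 (by simpa using y.2)
    rw [hc, hd]
    simp
  obtain ⟨v, hv⟩ := hne
  obtain ⟨a, rfl⟩ := hleft v hv
  refine ⟨a, ?_⟩
  apply Finset.eq_singleton_iff_unique_mem.2 ⟨hv, ?_⟩
  intro x hx
  have hr := hconn.preconnected ⟨x, by simpa using hx⟩ ⟨inl a, by simpa using hv⟩
  rw [hbot, SimpleGraph.reachable_bot] at hr
  exact congrArg Subtype.val hr

lemma good_right_eq_singleton (S : Finset W) (hS : S ∈ goodSets (G))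
    (hL : S.toLeft = ∅) : ∃ b : Fin m, S = {inr b} := by
  rw [mem_goodSets] at hS
  obtain ⟨hne, hconn⟩ := hS
  have hright : ∀ x ∈ S, ∃ b : Fin m, x = inr b := by
    intro x hx
    cases x with
    | inr b => exact ⟨b, rfl⟩
    | inl a => exact absurd (mem_toLeft.2 hx) (by simp [hL])
  have hbot : (G).induce (S : Set W) = ⊥ := by
    ext x y
    simp only [SimpleGraph.comap_adj, SimpleGraph.bot_adj, iff_false,
      Function.Embedding.coe_subtype]
    obtain ⟨c, hc⟩ := hright x.1 (by simpa using x.2)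
    obtain ⟨d, hd⟩ := hright y.1 (by simpa using y.2)
    rw [hc, hd]
    simp
  obtain ⟨v, hv⟩ := hne
  obtain ⟨b, rfl⟩ := hright v hv
  refine ⟨b, ?_⟩
  apply Finset.eq_singleton_iff_unique_mem.2 ⟨hv, ?_⟩
  intro x hx
  have hr := hconn.preconnected ⟨x, by simpa using hx⟩ ⟨inr b, by simpa using hv⟩
  rw [hbot, SimpleGraph.reachable_bot] at hr
  exact congrArg Subtype.val hr

/-- Grouping a sum over nonempty subsets of `Fin N` by cardinality. -/
lemma group_sum {M : Type*} [AddCommGroup M] (N : ℕ) (f : ℕ → M) :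
    ∑ A ∈ (Finset.univ : Finset (Finset (Fin N))).filter (fun A => A.Nonempty), f A.card
      = ∑ i ∈ Finset.Icc 1 N, (N.choose i) • f i := by
  have h1 : ∑ A ∈ (Finset.univ : Finset (Finset (Fin N))), f A.card
      = ∑ i ∈ Finset.range (N + 1), (N.choose i) • f i := by
    rw [← Finset.powerset_univ]
    simpa using Finset.sum_powerset_apply_card f (x := (Finset.univ : Finset (Fin N)))
  have h2 : (Finset.univ : Finset (Finset (Fin N))).filter (fun A => ¬ A.Nonempty)
      = {∅} := by
    ext A; simp [Finset.not_nonempty_iff_eq_empty]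
  have h3 := Finset.sum_filter_add_sum_filter_not
    (Finset.univ : Finset (Finset (Fin N))) (fun A => A.Nonempty) (fun A => f A.card)
  rw [h2, Finset.sum_singleton] at h3
  have h4 : Finset.range (N + 1) = insert 0 (Finset.Icc 1 N) := by
    ext x
    simp only [Finset.mem_range, Finset.mem_insert, Finset.mem_Icc]
    omega
  have h5 : ∑ i ∈ Finset.range (N + 1), (N.choose i) • f i
      = f 0 + ∑ i ∈ Finset.Icc 1 N, (N.choose i) • f i := by
    rw [h4, Finset.sum_insert (by simp)]
    simp
  have : (∑ A ∈ (Finset.univ : Finset (Finset (Fin N))).filter (fun A => A.Nonempty),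
      f A.card) + f (∅ : Finset (Fin N)).card
      = f 0 + ∑ i ∈ Finset.Icc 1 N, (N.choose i) • f i := by
    rw [h3, h1, h5]
  simpa [add_comm] using this

end Aux

/-- the alliance polynomial of the complete bipartite graph `K_{n,m}`. -/
theorem alliancePoly_completeBipartiteGraph (n m : ℕ) (hn : 1 ≤ n) (hm : 1 ≤ m) :
    alliancePoly (completeBipartiteGraph (Fin n) (Fin m))
      = C (n : ℤ) * X ^ n + C (m : ℤ) * X ^ m
        + ∑ i ∈ Finset.Icc 1 n, ∑ j ∈ Finset.Icc 1 m,
            C ((n.choose i * m.choose j : ℕ) : ℤ)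
              * X ^ (((n : ℤ) + (m : ℤ)
                  + min (2 * (i : ℤ) - n) (2 * (j : ℤ) - m)).toNat) := by
  classical
  set Gr := completeBipartiteGraph (Fin n) (Fin m) with hGr
  have hcard : ((Fintype.card (Fin n ⊕ Fin m) : ℤ)) = (n : ℤ) + m := by
    simp [Fintype.card_sum]
  set f : Finset (Fin n ⊕ Fin m) → Polynomial ℤ :=
    fun S => X ^ (((Fintype.card (Fin n ⊕ Fin m) : ℤ) + exactIndex Gr S).toNat) with hf
  have hpoly : alliancePoly Gr = ∑ S ∈ goodSets Gr, f S := rfl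
  set p : Finset (Fin n ⊕ Fin m) → Prop := fun S => S.toLeft.Nonempty ∧ S.toRight.Nonempty
    with hp
  have hsplit := Finset.sum_filter_add_sum_filter_not (goodSets Gr) p f
  -- the non-mixed part
  have hsingle : (goodSets Gr).filter (fun S => ¬ p S)
      = ((Finset.univ : Finset (Fin n)).image fun a => ({Sum.inl a} : Finset (Fin n ⊕ Fin m)))
        ∪ ((Finset.univ : Finset (Fin m)).image fun b => {Sum.inr b}) := by
    ext S
    simp only [Finset.mem_filter, Finset.mem_union, Finset.mem_image, Finset.mem_univ,
      true_and, hp]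
    constructor
    · rintro ⟨hS, hnp⟩
      by_cases hR : S.toRight = ∅
      · obtain ⟨a, rfl⟩ := good_left_eq_singleton S hS hR
        exact Or.inl ⟨a, rfl⟩
      · have hRne : S.toRight.Nonempty := Finset.nonempty_iff_ne_empty.2 hR
        have hL : S.toLeft = ∅ := by
          by_contra hL
          exact hnp ⟨Finset.nonempty_iff_ne_empty.2 hL, hRne⟩
        obtain ⟨b, rfl⟩ := good_right_eq_singleton S hS hL
        exact Or.inr ⟨b, rfl⟩
    · rintro (⟨a, rfl⟩ | ⟨b, rfl⟩)
      · refine ⟨singleton_good _, ?_⟩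
        rintro ⟨-, hr⟩
        obtain ⟨x, hx⟩ := hr
        simp at hx
      · refine ⟨singleton_good _, ?_⟩
        rintro ⟨hl, -⟩
        obtain ⟨x, hx⟩ := hl
        simp at hx
  have hdisj : Disjoint
      ((Finset.univ : Finset (Fin n)).image fun a => ({Sum.inl a} : Finset (Fin n ⊕ Fin m)))
      ((Finset.univ : Finset (Fin m)).image fun b => {Sum.inr b}) := by
    rw [Finset.disjoint_left]
    rintro S hS hS'
    simp only [Finset.mem_image, Finset.mem_univ, true_and] at hS hS'
    obtain ⟨a, rfl⟩ := hS
    obtain ⟨b, hb⟩ := hS'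
    have := Finset.singleton_injective hb
    simp at this
  have hinl : Function.Injective (fun a : Fin n => ({Sum.inl a} : Finset (Fin n ⊕ Fin m))) := by
    intro a b hab
    have := Finset.singleton_injective hab
    simpa using this
  have hinr : Function.Injective (fun b : Fin m => ({Sum.inr b} : Finset (Fin n ⊕ Fin m))) := by
    intro a b hab
    have := Finset.singleton_injective hab
    simpa using this
  have hsum_singles : ∑ S ∈ (goodSets Gr).filter (fun S => ¬ p S), f S
      = C (n : ℤ) * X ^ n + C (m : ℤ) * X ^ m := by
    rw [hsingle, Finset.sum_union hdisj,
      Finset.sum_image (fun a _ b _ h => hinl h),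
      Finset.sum_image (fun a _ b _ h => hinr h)]
    have e1 : ∀ a : Fin n, f {Sum.inl a} = X ^ n := by
      intro a
      rw [hf]
      simp only [hGr]
      rw [exactIndex_singleton_inl, hcard]
      congr 1
      omega
    have e2 : ∀ b : Fin m, f {Sum.inr b} = X ^ m := by
      intro b
      rw [hf]
      simp only [hGr]
      rw [exactIndex_singleton_inr, hcard]
      congr 1
      omega
    rw [Finset.sum_congr rfl (fun a _ => e1 a), Finset.sum_congr rfl (fun b _ => e2 b)]
    simp [Finset.card_univ, nsmul_eq_mul]
  -- the mixed part
  have hsum_mixed : ∑ S ∈ (goodSets Gr).filter p, f S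
      = ∑ i ∈ Finset.Icc 1 n, ∑ j ∈ Finset.Icc 1 m,
          C ((n.choose i * m.choose j : ℕ) : ℤ)
            * X ^ (((n : ℤ) + (m : ℤ)
                + min (2 * (i : ℤ) - n) (2 * (j : ℤ) - m)).toNat) := by
    have hbij : ∑ S ∈ (goodSets Gr).filter p, f S
        = ∑ q ∈ ((Finset.univ.filter (fun A : Finset (Fin n) => A.Nonempty)) ×ˢ
            (Finset.univ.filter (fun B : Finset (Fin m) => B.Nonempty))),
            X ^ (((n : ℤ) + (m : ℤ)
              + min (2 * (q.1.card : ℤ) - n) (2 * (q.2.card : ℤ) - m)).toNat) := by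
      refine Finset.sum_nbij' (fun S => (S.toLeft, S.toRight))
        (fun q => q.1.disjSum q.2) ?_ ?_ ?_ ?_ ?_
      · intro S hS
        rw [Finset.mem_filter] at hS
        simp only [Finset.mem_product, Finset.mem_filter, Finset.mem_univ, true_and]
        exact hS.2
      · intro q hq
        simp only [Finset.mem_product, Finset.mem_filter, Finset.mem_univ, true_and] at hq
        rw [Finset.mem_filter]
        refine ⟨mixed_good _ (by simpa using hq.1) (by simpa using hq.2), ?_⟩
        exact ⟨by simpa using hq.1, by simpa using hq.2⟩
      · intro S _
        exact Finset.toLeft_disjSum_toRight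
      · intro q _
        simp
      · intro S hS
        rw [Finset.mem_filter] at hS
        rw [hf]
        simp only [hGr]
        rw [exactIndex_mixed S hS.2.1 hS.2.2, hcard]
    rw [hbij, Finset.sum_product]
    rw [group_sum n (fun i => ∑ B ∈ Finset.univ.filter (fun B : Finset (Fin m) => B.Nonempty),
      X ^ (((n : ℤ) + (m : ℤ) + min (2 * (i : ℤ) - n) (2 * (B.card : ℤ) - m)).toNat))]
    refine Finset.sum_congr rfl fun i _ => ?_
    rw [group_sum m (fun j =>
      X ^ (((n : ℤ) + (m : ℤ) + min (2 * (i : ℤ) - n) (2 * (j : ℤ) - m)).toNat))]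
    rw [Finset.smul_sum]
    refine Finset.sum_congr rfl fun j _ => ?_
    rw [smul_smul, nsmul_eq_mul]
    push_cast
    simp [C_eq_natCast]
  rw [hpoly, ← hsplit, hsum_mixed, hsum_singles]
  ring
end
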